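/- Let X be a fractured Polish space, μ a non-atomic Borel probability measure on X with full support, and T an ergodic measure-preserving homeomorphism of (X, μ). If 𝒯 is an array in X of height h, then for every integer m ≥ 1, 𝒯 has an extension of height hm. -/

import Mathlib

open MeasureTheory Set TopologicalSpace

/-- A topological space is *fractured* if its topology has a countable base
consisting of clopen subsets. -/
def Fractured (X : Type*) [TopologicalSpace X] : Prop :=
  ∃ B : Set (Set X), B.Countable ∧ (∀ s ∈ B, IsClopen s) ∧ IsTopologicalBasis B

variable {X : Type*} [TopologicalSpace X]

/-- A *column* of height `h` for a homeomorphism `T`: a clopen base `B₀` together with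
integers `n₀ = 0, n₁, …, n_{h-1}` such that the levels `T^{nᵢ} B₀` are pairwise disjoint. -/
structure Column (T : X ≃ₜ X) (h : ℕ) where
  base : Set X
  clopen : IsClopen base
  n : Fin h → ℤ
  n_zero : ∀ i : Fin h, (i : ℕ) = 0 → n i = 0
  disj : Pairwise (Function.onFun Disjoint (fun i : Fin h => (T.toEquiv ^ n i) '' base))

namespace Column

variable {T : X ≃ₜ X} {h : ℕ}

/-- The `i`-th level `T^{nᵢ} B₀` of a column. -/
def level (C : Column T h) (i : Fin h) : Set X := (T.toEquiv ^ C.n i) '' C.base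

/-- The union of the levels of a column. -/
def carrier (C : Column T h) : Set X := ⋃ i, C.level i

/-- A *slice* of a column: same integers, base a clopen subset of the original base. -/
def IsSliceOf (C' C : Column T h) : Prop := C'.n = C.n ∧ C'.base ⊆ C.base

end Column

/-- An *array* for `T` of height `h`: a countable collection of pairwise disjoint columns of
height `h` (finite collections are obtained by letting all but finitely many columns have
empty base). -/
structure TArray (T : X ≃ₜ X) (h : ℕ) where
  col : ℕ → Column T h
  disj : Pairwise (Function.onFun Disjoint (fun i => (col i).carrier))

namespace TArray

variable {T : X ≃ₜ X} {h : ℕ}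

/-- The union of all levels of all columns of an array. -/
def carrier (A : TArray T h) : Set X := ⋃ i, (A.col i).carrier

/-- The base of an array: the union of the bases of its columns. -/
def base (A : TArray T h) : Set X := ⋃ i, (A.col i).base

/-- A *sub-array*: each of its columns is a slice of a column of the given array. -/
def IsSubArrayOf (A' A : TArray T h) : Prop := ∀ i, ∃ j, (A'.col i).IsSliceOf (A.col j)

/-- A *refinement*: a sub-array whose levels fill out the levels of the given array. -/
def IsRefinementOf [MeasurableSpace X] (μ : Measure X) (A' A : TArray T h) : Prop :=
  A'.IsSubArrayOf A ∧ μ A'.carrier = μ A.carrier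

end TArray

lemma concat_index_lt {m h : ℕ} (k : Fin m) (i : Fin h) :
    (k : ℕ) * h + (i : ℕ) < m * h :=
  calc (k : ℕ) * h + (i : ℕ) < (k : ℕ) * h + h := Nat.add_lt_add_left i.isLt _
    _ = ((k : ℕ) + 1) * h := by ring
    _ ≤ m * h := Nat.mul_le_mul_right h k.isLt

/-- `D` is the *concatenation* `[C₀, …, C_{m-1}]` of the columns `C k`: the bases of the
`C k` form a column (they are images `T^{m_k}` of the base of `D = C₀`, pairwise disjoint),
and the levels of `D` are the levels of `C₀, …, C_{m-1}` traversed in order. -/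
def Column.IsConcatenationOf {T : X ≃ₜ X} {m h : ℕ}
    (D : Column T (m * h)) (C : Fin m → Column T h) : Prop :=
  ∃ mk : Fin m → ℤ,
    (∀ k : Fin m, (k : ℕ) = 0 → mk k = 0) ∧
    (∀ k, (T.toEquiv ^ mk k) '' D.base = (C k).base) ∧
    Pairwise (Function.onFun Disjoint (fun k => (C k).carrier)) ∧
    ∀ (k : Fin m) (i : Fin h),
      D.n ⟨(k : ℕ) * h + (i : ℕ), concat_index_lt k i⟩ = mk k + (C k).n i

/-- The data exhibiting the array `Ahat` (of height `m * h`) as an *extension* of the array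
`A` (of height `h`): a refinement `ref` of `A` (with each column of `ref` a slice of the
column `wit c` of `A`) such that every column of `Ahat` is a concatenation of columns of
`ref`, and `Ahat` fills out `A`. -/
structure ExtensionData [MeasurableSpace X] (μ : Measure X) {T : X ≃ₜ X} {m h : ℕ}
    (Ahat : TArray T (m * h)) (A : TArray T h) where
  ref : TArray T h
  wit : ℕ → ℕ
  slice : ∀ c, (ref.col c).IsSliceOf (A.col (wit c))
  ref_fill : μ ref.carrier = μ A.carrier
  f : ℕ → Fin m → ℕ
  concat : ∀ i, (Ahat.col i).IsConcatenationOf (fun k => ref.col (f i k))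
  fill : μ Ahat.carrier = μ A.carrier

/-- `Ahat` is an *extension* of `A`. -/
def TArray.IsExtensionOf [MeasurableSpace X] (μ : Measure X) {T : X ≃ₜ X} {m h : ℕ}
    (Ahat : TArray T (m * h)) (A : TArray T h) : Prop :=
  Nonempty (ExtensionData μ Ahat A)

/-- The data exhibiting the array `A` (of height `m * h`) as a *stacking* of the pairwise
disjoint equal-width arrays `Ts 0, …, Ts (m-1)` (of height `h`): refinements `ref k` of
`Ts k` such that every column of `A` is a concatenation `[C₀, …, C_{m-1}]` with `C k` a
column of `ref k`, and `A` fills out `⋃ k, Ts k`. -/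
structure StackingData [MeasurableSpace X] (μ : Measure X) {T : X ≃ₜ X} {m h : ℕ}
    (A : TArray T (m * h)) (Ts : Fin m → TArray T h) where
  ref : Fin m → TArray T h
  ref_is : ∀ k, (ref k).IsRefinementOf μ (Ts k)
  f : ℕ → Fin m → ℕ
  concat : ∀ i, (A.col i).IsConcatenationOf (fun k => (ref k).col (f i k))
  fill : μ A.carrier = μ (⋃ k, (Ts k).carrier)


/-!
Each base `B` of a column of `A` is, up to a null set, the union of the levels of an array of
height `m`. Running through the column from each level of a column of that array gives a column
of height `m * h`, the concatenation of the `m` slices of the original column over these levels;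
these columns form the extension.

To tile a clopen set `V` by columns of height `m`, take a clopen set `C` of small positive measure.
By ergodicity almost every point of `V` lies on an excursion `x, T x, …, T^(w-1) x` of a point
`x ∈ C` whose first return to `C` is at time `w`. The visits to `V` of the excursions with the same
return time and the same itinerary are disjoint clopen translates of one set; grouping them in
blocks of `m` consecutive visits gives columns of height `m`, and the fewer than `m` visits left
over per itinerary have total measure at most `m * μ C`. Keeping finitely many blocks leaves a
clopen remainder of small measure, to which the construction is applied again; this exhausts `V`
up to a null set.
-/

open Function Filter
open scoped ENNReal Topology

theorem Equiv.Perm.image_zpow {α : Type*} (e : Equiv.Perm α) (z : ℤ) (E : Set α) :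
    (e ^ z) '' E = (e ^ (-z)) ⁻¹' E := by
  rw [Equiv.image_eq_preimage_symm, ← Equiv.Perm.inv_def, zpow_neg]

theorem Equiv.Perm.image_zpow_add {α : Type*} (e : Equiv.Perm α) (a b : ℤ) (E : Set α) :
    (e ^ (a + b)) '' E = (e ^ a) '' ((e ^ b) '' E) := by
  rw [zpow_add, Equiv.Perm.coe_mul, image_comp]

section Powers

variable (T : X ≃ₜ X)

theorem Homeomorph.continuous_toEquiv_zpow (z : ℤ) : Continuous ⇑(T.toEquiv ^ z) := by
  induction z using Int.induction_on with
  | zero => exact continuous_id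
  | succ n ih =>
    rw [zpow_add_one, Equiv.Perm.coe_mul]
    exact ih.comp T.continuous
  | pred n ih =>
    rw [zpow_sub_one, Equiv.Perm.coe_mul]
    exact ih.comp T.symm.continuous

theorem IsClopen.image_toEquiv_zpow {E : Set X} (hE : IsClopen E) (z : ℤ) :
    IsClopen ((T.toEquiv ^ z) '' E) := by
  rw [Equiv.Perm.image_zpow]
  exact hE.preimage (T.continuous_toEquiv_zpow _)

theorem Homeomorph.image_toEquiv_zpow_natCast (n : ℕ) (E : Set X) :
    (T.toEquiv ^ (n : ℤ)) '' E = (⇑T)^[n] '' E := by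
  rw [zpow_natCast, Equiv.Perm.coe_pow]
  rfl

theorem Homeomorph.image_toEquiv_zpow_sub_image_iterate (a b : ℕ) (E : Set X) :
    (T.toEquiv ^ ((a : ℤ) - b)) '' ((⇑T)^[b] '' E) = (⇑T)^[a] '' E := by
  rw [← T.image_toEquiv_zpow_natCast b, ← Equiv.Perm.image_zpow_add, sub_add_cancel,
    T.image_toEquiv_zpow_natCast]

variable {T} [MeasurableSpace X] [BorelSpace X] {μ : Measure X}

theorem MeasureTheory.MeasurePreserving.toEquiv_zpow (hT : MeasurePreserving T μ μ) (z : ℤ) :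
    MeasurePreserving ⇑(T.toEquiv ^ z) μ μ := by
  have hTsymm : MeasurePreserving T.symm μ μ := hT.symm T.toMeasurableEquiv
  induction z using Int.induction_on with
  | zero => exact MeasurePreserving.id μ
  | succ n ih =>
    rw [zpow_add_one, Equiv.Perm.coe_mul]
    exact ih.comp hT
  | pred n ih =>
    rw [zpow_sub_one, Equiv.Perm.coe_mul]
    exact ih.comp hTsymm

theorem MeasureTheory.MeasurePreserving.measure_image_toEquiv_zpow
    (hT : MeasurePreserving T μ μ) (z : ℤ) {E : Set X} (hE : MeasurableSet E) :
    μ ((T.toEquiv ^ z) '' E) = μ E := by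
  rw [Equiv.Perm.image_zpow]
  exact (hT.toEquiv_zpow _).measure_preimage hE.nullMeasurableSet

theorem MeasureTheory.MeasurePreserving.measure_image_iterate (hT : MeasurePreserving T μ μ)
    (n : ℕ) {E : Set X} (hE : MeasurableSet E) : μ ((⇑T)^[n] '' E) = μ E :=
  T.image_toEquiv_zpow_natCast n E ▸ hT.measure_image_toEquiv_zpow n hE

end Powers

theorem concat_index_eq_finProdFinEquiv {m h : ℕ} (k : Fin m) (i : Fin h) :
    (⟨(k : ℕ) * h + (i : ℕ), concat_index_lt k i⟩ : Fin (m * h)) = finProdFinEquiv (k, i) :=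
  Fin.ext (by simp [finProdFinEquiv, mul_comm, add_comm])

namespace Column

variable {T : X ≃ₜ X} {h m : ℕ}

theorem isClopen_level (C : Column T h) (i : Fin h) : IsClopen (C.level i) :=
  C.clopen.image_toEquiv_zpow T _

theorem isClopen_carrier (C : Column T h) : IsClopen C.carrier :=
  isClopen_iUnion_of_finite C.isClopen_level

theorem level_subset_carrier (C : Column T h) (i : Fin h) : C.level i ⊆ C.carrier :=
  subset_iUnion C.level i

theorem disjoint_image_of_subset_base (C : Column T h) {F F' : Set X} (hF : F ⊆ C.base)
    (hF' : F' ⊆ C.base) {i i' : Fin h} (hFF' : i = i' → Disjoint F F') :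
    Disjoint ((T.toEquiv ^ C.n i) '' F) ((T.toEquiv ^ C.n i') '' F') := by
  rcases eq_or_ne i i' with rfl | hii'
  · exact disjoint_image_of_injective (Equiv.injective _) (hFF' rfl)
  · exact (C.disj hii').mono (image_mono hF) (image_mono hF')

def slice (C : Column T h) (F : Set X) (hF : IsClopen F) (hFC : F ⊆ C.base) : Column T h where
  base := F
  clopen := hF
  n := C.n
  n_zero := C.n_zero
  disj _ _ hii' := (C.disj hii').mono (image_mono hFC) (image_mono hFC)

section Slice

variable (C : Column T h) {F F' : Set X} (hF : IsClopen F) (hFC : F ⊆ C.base)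
  (hF' : IsClopen F') (hFC' : F' ⊆ C.base)

theorem slice_isSliceOf : (C.slice F hF hFC).IsSliceOf C := ⟨rfl, hFC⟩

theorem carrier_slice_subset : (C.slice F hF hFC).carrier ⊆ C.carrier :=
  iUnion_mono fun _ => image_mono hFC

theorem disjoint_carrier_slice (hFF' : Disjoint F F') :
    Disjoint (C.slice F hF hFC).carrier (C.slice F' hF' hFC').carrier := by
  simp only [carrier, disjoint_iUnion_left, disjoint_iUnion_right]
  exact fun i i' => C.disjoint_image_of_subset_base hFC hFC' fun _ => hFF'

end Slice

theorem disjoint_image_level_of_carrier_subset (C : Column T h) (S : Column T m)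
    (hS : S.carrier ⊆ C.base) {k k' : Fin m} {i i' : Fin h} (hne : (k, i) ≠ (k', i')) :
    Disjoint ((T.toEquiv ^ C.n i) '' S.level k) ((T.toEquiv ^ C.n i') '' S.level k') :=
  C.disjoint_image_of_subset_base ((S.level_subset_carrier k).trans hS)
    ((S.level_subset_carrier k').trans hS) fun hii' => S.disj fun hkk' => hne (by rw [hkk', hii'])

/-- The column of height `m * h` that runs through `C` from each level of `S` in turn: its level
`finProdFinEquiv (k, i)` is the image of the level `k` of `S` under `T ^ C.n i`. -/
def stack (C : Column T h) (S : Column T m) (hS : S.carrier ⊆ C.base) : Column T (m * h) where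
  base := S.base
  clopen := S.clopen
  n l := S.n (finProdFinEquiv.symm l).1 + C.n (finProdFinEquiv.symm l).2
  n_zero l hl := by
    rw [finProdFinEquiv_symm_apply, S.n_zero _ (by simp [hl]), C.n_zero _ (by simp [hl]),
      add_zero]
  disj l l' hll' := by
    obtain ⟨⟨k, i⟩, rfl⟩ := finProdFinEquiv.surjective l
    obtain ⟨⟨k', i'⟩, rfl⟩ := finProdFinEquiv.surjective l'
    simp only [onFun, Equiv.symm_apply_apply]
    rw [add_comm, Equiv.Perm.image_zpow_add, add_comm, Equiv.Perm.image_zpow_add]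
    exact C.disjoint_image_level_of_carrier_subset S hS fun h => hll' (by rw [h])

theorem isConcatenationOf_stack (C : Column T h) (S : Column T m) (hS : S.carrier ⊆ C.base) :
    (C.stack S hS).IsConcatenationOf fun k =>
      C.slice (S.level k) (S.isClopen_level k) ((S.level_subset_carrier k).trans hS) := by
  refine ⟨S.n, S.n_zero, fun _ => rfl, fun k k' hkk' => C.disjoint_carrier_slice _ _ _ _
    (S.disj hkk'), fun k i => ?_⟩
  simp only [concat_index_eq_finProdFinEquiv, stack, slice, Equiv.symm_apply_apply]

theorem IsConcatenationOf.carrier_eq {D : Column T (m * h)} {C : Fin m → Column T h}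
    (hD : D.IsConcatenationOf C) : D.carrier = ⋃ k, (C k).carrier := by
  obtain ⟨mk, -, hbase, -, hn⟩ := hD
  have hlevel (k : Fin m) (i : Fin h) : D.level (finProdFinEquiv (k, i)) = (C k).level i := by
    rw [← concat_index_eq_finProdFinEquiv, level, hn, add_comm, Equiv.Perm.image_zpow_add, hbase,
      level]
  simp only [carrier, ← finProdFinEquiv.surjective.iUnion_comp D.level, iUnion_prod', hlevel]

def ofIterates [NeZero m] (E : Set X) (hE : IsClopen E) (t : Fin m → ℕ)
    (hdisj : Pairwise (Disjoint on fun k => (⇑T)^[t k] '' E)) : Column T m where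
  base := (⇑T)^[t 0] '' E
  clopen := T.image_toEquiv_zpow_natCast (t 0) E ▸ hE.image_toEquiv_zpow T _
  n k := t k - t 0
  n_zero k hk := by rw [show k = 0 from Fin.ext hk, sub_self]
  disj k k' hkk' := by
    simp only [onFun, T.image_toEquiv_zpow_sub_image_iterate]
    exact hdisj hkk'

theorem level_ofIterates [NeZero m] (E : Set X) (hE : IsClopen E) (t : Fin m → ℕ)
    (hdisj : Pairwise (Disjoint on fun k => (⇑T)^[t k] '' E)) (k : Fin m) :
    (ofIterates E hE t hdisj).level k = (⇑T)^[t k] '' E :=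
  T.image_toEquiv_zpow_sub_image_iterate _ _ _

end Column

namespace TArray

variable {T : X ≃ₜ X} {h m : ℕ}

theorem disjoint_level (S : TArray T h) {p p' : ℕ} {k k' : Fin h} (hne : (p, k) ≠ (p', k')) :
    Disjoint ((S.col p).level k) ((S.col p').level k') := by
  rcases eq_or_ne p p' with rfl | hpp'
  · exact (S.col p).disj fun hkk' => hne (by rw [hkk'])
  · exact (S.disj hpp').mono ((S.col p).level_subset_carrier k)
      ((S.col p').level_subset_carrier k')

def ofEquiv {ι : Type*} (e : ℕ ≃ ι) (C : ι → Column T h)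
    (hC : Pairwise (Disjoint on fun i => (C i).carrier)) : TArray T h where
  col n := C (e n)
  disj := hC.comp_of_injective e.injective

theorem carrier_ofEquiv {ι : Type*} (e : ℕ ≃ ι) (C : ι → Column T h)
    (hC : Pairwise (Disjoint on fun i => (C i).carrier)) :
    (ofEquiv e C hC).carrier = ⋃ i, (C i).carrier :=
  e.surjective.iUnion_comp fun i => (C i).carrier

theorem exists_carrier_eq_iUnion {ι : Type*} [Countable ι] [Infinite ι] (C : ι → Column T h)
    (hC : Pairwise (Disjoint on fun i => (C i).carrier)) :
    ∃ S : TArray T h, S.carrier = ⋃ i, (C i).carrier :=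
  let ⟨e⟩ := nonempty_equiv_of_countable (α := ℕ) (β := ι)
  ⟨ofEquiv e C hC, carrier_ofEquiv e C hC⟩

def truncate (S : TArray T h) (N : ℕ) : TArray T h where
  col n := (S.col n).slice (if n ≤ N then (S.col n).base else ∅)
    (by split_ifs; exacts [(S.col n).clopen, isClopen_empty]) (by split_ifs <;> simp)
  disj := S.disj.mono fun _ _ hnn' => hnn'.mono (Column.carrier_slice_subset _ _ _)
    (Column.carrier_slice_subset _ _ _)

theorem carrier_truncate (S : TArray T h) (N : ℕ) :
    (S.truncate N).carrier = accumulate (fun n => (S.col n).carrier) N := by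
  simp only [carrier, truncate, accumulate_def]
  refine iUnion_congr fun n => ?_
  split_ifs with hn <;> simp [hn, Column.carrier, Column.slice, Column.level]

theorem isClopen_carrier_truncate (S : TArray T h) (N : ℕ) : IsClopen (S.truncate N).carrier := by
  rw [carrier_truncate, accumulate_def]
  exact (finite_Iic N).isClopen_biUnion fun n _ => (S.col n).isClopen_carrier

theorem carrier_truncate_subset (S : TArray T h) (N : ℕ) : (S.truncate N).carrier ⊆ S.carrier := by
  rw [carrier_truncate]
  exact accumulate_subset_iUnion N

theorem isOpen_carrier (S : TArray T h) : IsOpen S.carrier :=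
  isOpen_iUnion fun n => (S.col n).isClopen_carrier.isOpen

theorem exists_measure_carrier_diff_truncate_le [MeasurableSpace X] [OpensMeasurableSpace X]
    {μ : Measure X} [IsFiniteMeasure μ] (S : TArray T h) {ε : ℝ≥0∞} (hε : ε ≠ 0) :
    ∃ N, μ (S.carrier \ (S.truncate N).carrier) ≤ ε := by
  have hmeas (N : ℕ) : NullMeasurableSet (S.carrier \ (S.truncate N).carrier) μ :=
    (S.isOpen_carrier.measurableSet.diff
      (S.isClopen_carrier_truncate N).isOpen.measurableSet).nullMeasurableSet
  have hanti : Antitone fun N => S.carrier \ (S.truncate N).carrier := fun a b hab =>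
    sdiff_subset_sdiff_right (by simpa only [carrier_truncate] using monotone_accumulate hab)
  have hempty : ⋂ N, (S.carrier \ (S.truncate N).carrier) = ∅ := by
    rw [← sdiff_iUnion, iUnion_congr (carrier_truncate S), iUnion_accumulate, carrier, sdiff_self]
  have hlim := tendsto_measure_iInter_atTop hmeas hanti ⟨0, measure_ne_top μ _⟩
  rw [hempty, measure_empty] at hlim
  exact (hlim.eventually (ge_mem_nhds (pos_iff_ne_zero.2 hε))).exists

theorem exists_carrier_eq_iUnion_carrier (R : ℕ → TArray T h)
    (hR : Pairwise (Disjoint on fun t => (R t).carrier)) :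
    ∃ S : TArray T h, S.carrier = ⋃ t, (R t).carrier := by
  obtain ⟨S, hS⟩ := exists_carrier_eq_iUnion (fun x : ℕ × ℕ => (R x.1).col x.2) <| by
    rintro ⟨t, n⟩ ⟨t', n'⟩ hne
    rcases eq_or_ne t t' with rfl | htt'
    · exact (R t).disj fun h => hne (Prod.ext rfl h)
    · exact (hR htt').mono (subset_iUnion (fun n => ((R t).col n).carrier) n)
        (subset_iUnion (fun n => ((R t').col n).carrier) n')
  exact ⟨S, hS.trans (iUnion_prod' fun x : ℕ × ℕ => ((R x.1).col x.2).carrier)⟩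

end TArray

theorem TArray.exists_isExtensionOf_of_isConcatenationOf [MeasurableSpace X] {μ : Measure X}
    {T : X ≃ₜ X} {h m : ℕ} [NeZero m] {ι : Type*} [Countable ι] [Infinite ι] (A : TArray T h)
    (D : ι → Column T (m * h)) (C : ι → Fin m → Column T h) (wit : ι → ℕ)
    (hslice : ∀ i k, (C i k).IsSliceOf (A.col (wit i)))
    (hdisj : Pairwise (Disjoint on fun ik : ι × Fin m => (C ik.1 ik.2).carrier))
    (hD : ∀ i, (D i).IsConcatenationOf (C i))
    (hfill : μ (⋃ i, ⋃ k, (C i k).carrier) = μ A.carrier) :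
    ∃ Ahat : TArray T (m * h), Ahat.IsExtensionOf μ A := by
  obtain ⟨e⟩ := nonempty_equiv_of_countable (α := ℕ) (β := ι)
  obtain ⟨e'⟩ := nonempty_equiv_of_countable (α := ℕ) (β := ι × Fin m)
  have hDdisj : Pairwise (Disjoint on fun i => (D i).carrier) := by
    intro i i' hii'
    simp only [onFun, (hD _).carrier_eq, disjoint_iUnion_left, disjoint_iUnion_right]
    exact fun _ _ => @hdisj (i, _) (i', _) fun h => hii' (congrArg Prod.fst h)
  let ref := TArray.ofEquiv e' (fun ik => C ik.1 ik.2) hdisj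
  refine ⟨TArray.ofEquiv e D hDdisj, ⟨
    { ref := ref
      wit := fun n => wit (e' n).1
      slice := fun n => hslice _ _
      ref_fill := by rw [TArray.carrier_ofEquiv, iUnion_prod', hfill]
      f := fun n k => e'.symm (e n, k)
      concat := fun n => by
        simpa only [ref, TArray.ofEquiv, Equiv.apply_symm_apply] using hD (e n)
      fill := ?_ }⟩⟩
  simp_rw [TArray.carrier_ofEquiv, (hD _).carrier_eq]
  exact hfill

theorem TArray.carrier_diff_subset_iUnion_image_base_diff {T : X ≃ₜ X} {h m : ℕ}
    (A : TArray T h) (S : ℕ → TArray T m) {U : Set X}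
    (hU : ∀ c p k i, (T.toEquiv ^ (A.col c).n i) '' ((S c).col p).level k ⊆ U) :
    A.carrier \ U ⊆ ⋃ c, ⋃ i, (T.toEquiv ^ (A.col c).n i) '' ((A.col c).base \ (S c).carrier) := by
  rintro y ⟨hy, hyU⟩
  simp only [TArray.carrier, Column.carrier, Column.level, mem_iUnion, mem_image] at hy
  obtain ⟨c, i, x, hx, rfl⟩ := hy
  refine mem_iUnion₂_of_mem (i := c) i ⟨x, ⟨hx, fun hxS => hyU ?_⟩, rfl⟩
  simp only [TArray.carrier, Column.carrier, mem_iUnion] at hxS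
  obtain ⟨p, k, hxk⟩ := hxS
  exact hU c p k i ⟨x, hxk, rfl⟩

theorem TArray.exists_isExtensionOf_of_measure_base_diff_eq_zero [MeasurableSpace X]
    [BorelSpace X] {μ : Measure X} {T : X ≃ₜ X} (hT : MeasurePreserving T μ μ)
    {h m : ℕ} [NeZero m] (A : TArray T h) (S : ℕ → TArray T m)
    (hS : ∀ c, (S c).carrier ⊆ (A.col c).base)
    (hnull : ∀ c, μ ((A.col c).base \ (S c).carrier) = 0) :
    ∃ Ahat : TArray T (m * h), Ahat.IsExtensionOf μ A := by
  have hlevel (c p : ℕ) (k : Fin m) : ((S c).col p).level k ⊆ (A.col c).base :=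
    (((S c).col p).level_subset_carrier k).trans ((subset_iUnion _ p).trans (hS c))
  set C : ℕ × ℕ → Fin m → Column T h := fun cp k =>
    (A.col cp.1).slice (((S cp.1).col cp.2).level k) (((S cp.1).col cp.2).isClopen_level k)
      (hlevel cp.1 cp.2 k)
  have hdisj : Pairwise (Disjoint on fun x : (ℕ × ℕ) × Fin m => (C x.1 x.2).carrier) := by
    rintro ⟨⟨c, p⟩, k⟩ ⟨⟨c', p'⟩, k'⟩ hne
    rcases eq_or_ne c c' with rfl | hcc'
    · exact Column.disjoint_carrier_slice _ _ _ _ _ <|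
        (S c).disjoint_level fun h => hne (by simp_all)
    · exact (A.disj hcc').mono (Column.carrier_slice_subset _ _ _)
        (Column.carrier_slice_subset _ _ _)
  have hsub := A.carrier_diff_subset_iUnion_image_base_diff S fun c p k i =>
    (subset_iUnion _ i).trans (subset_iUnion₂ (s := fun cp k => (C cp k).carrier) (c, p) k)
  have hfill : μ (⋃ cp, ⋃ k, (C cp k).carrier) = μ A.carrier := by
    refine measure_eq_measure_of_null_sdiff (iUnion₂_subset fun cp k =>
      (Column.carrier_slice_subset _ _ _).trans
        (subset_iUnion (fun c => (A.col c).carrier) cp.1))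
      (measure_mono_null hsub <| measure_iUnion_null fun c => measure_iUnion_null fun i => ?_)
    rw [hT.measure_image_toEquiv_zpow _ ((A.col c).clopen.isOpen.measurableSet.diff
      (S c).isOpen_carrier.measurableSet)]
    exact hnull c
  exact A.exists_isExtensionOf_of_isConcatenationOf
    (fun cp => (A.col cp.1).stack ((S cp.1).col cp.2) ((subset_iUnion _ cp.2).trans (hS cp.1)))
    C Prod.fst (fun _ _ => Column.slice_isSliceOf _ _ _) hdisj
    (fun _ => Column.isConcatenationOf_stack _ _ _) hfill

theorem Ergodic.ae_frequently_iterate_mem {α : Type*} [MeasurableSpace α] {μ : Measure α}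
    [IsFiniteMeasure μ] {f : α → α} (hf : Ergodic f μ) {s : Set α} (hs : MeasurableSet s)
    (h0 : μ s ≠ 0) : ∀ᵐ x ∂μ, ∃ᶠ n in atTop, f^[n] x ∈ s := by
  set G := ⋃ n, f^[n] ⁻¹' s
  have hG : MeasurableSet G := .iUnion fun n => hf.measurable.iterate n hs
  have hfG : f ⁻¹' G ⊆ G := by
    simp only [G, preimage_iUnion, ← preimage_comp, ← iterate_succ]
    exact iUnion_subset fun n => subset_iUnion (fun n => f^[n] ⁻¹' s) (n + 1)
  have hGuniv : G =ᵐ[μ] univ := by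
    refine (hf.ae_empty_or_univ_of_preimage_ae_le hG.nullMeasurableSet
      hfG.eventuallyLE).resolve_left fun hGnull => h0 ?_
    exact measure_mono_null (subset_iUnion (fun n => f^[n] ⁻¹' s) 0) (ae_eq_empty.1 hGnull)
  filter_upwards [ae_eq_univ.1 hGuniv,
    hf.conservative.ae_forall_image_mem_imp_frequently_image_mem hs.nullMeasurableSet]
    with x hxG hx
  obtain ⟨k, hk⟩ := mem_iUnion.1 hxG
  exact hx k hk

theorem exists_isClopen_measure_ne_zero_le [MeasurableSpace X] {μ : Measure X}
    [μ.OuterRegular] [NullSingletonClass μ] [NeZero μ] (hXf : Fractured X)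
    (hfull : ∀ U : Set X, IsOpen U → U.Nonempty → μ U ≠ 0) {δ : ℝ≥0∞} (hδ : δ ≠ 0) :
    ∃ C : Set X, IsClopen C ∧ μ C ≠ 0 ∧ μ C ≤ δ := by
  obtain ⟨B, -, hBclopen, hB⟩ := hXf
  obtain ⟨x⟩ := μ.nonempty_of_neZero
  obtain ⟨U, hxU, hU, hμU⟩ :=
    exists_isOpen_lt_of_lt (μ := μ) {x} δ (by rwa [measure_singleton, pos_iff_ne_zero])
  obtain ⟨C, hCB, hxC, hCU⟩ := hB.exists_subset_of_mem_open (singleton_subset_iff.1 hxU) hU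
  exact ⟨C, hBclopen C hCB, hfull C (hBclopen C hCB).isOpen ⟨x, hxC⟩,
    (measure_mono hCU).trans hμU.le⟩

section ReturnPattern

variable {α : Type*} {f : α → α} {C V : Set α}

variable (f C V) in
def returnPattern (w : ℕ) (F : Finset ℕ) : Set α :=
  {x | 0 < w ∧ F ⊆ Finset.range w ∧ x ∈ C ∧ f^[w] x ∈ C ∧ (∀ j ∈ Finset.Ioo 0 w, f^[j] x ∉ C) ∧
    ∀ j ∈ Finset.range w, (f^[j] x ∈ V ↔ j ∈ F)}

theorem isClopen_returnPattern [TopologicalSpace α] (hf : Continuous f) (hC : IsClopen C)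
    (hV : IsClopen V) (w : ℕ) (F : Finset ℕ) : IsClopen (returnPattern f C V w F) := by
  have hiff (j : ℕ) : IsClopen {x | f^[j] x ∈ V ↔ j ∈ F} := by
    by_cases hj : j ∈ F
    · simp only [hj, iff_true]
      exact hV.preimage (hf.iterate j)
    · simp only [hj, iff_false]
      exact hV.compl.preimage (hf.iterate j)
  have hconst (P : Prop) : IsClopen {_x : α | P} := by
    by_cases hP : P <;> simp [hP, isClopen_univ, isClopen_empty]
  simp only [returnPattern, ofPred_and, ofPred_forall]
  exact (hconst _).inter <| (hconst _).inter <| hC.inter <| (hC.preimage (hf.iterate w)).inter <|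
    (isClopen_biInter_finset fun j _ => hC.compl.preimage (hf.iterate j)).inter
      (isClopen_biInter_finset fun j _ => hiff j)

theorem mem_iff_of_mem_returnPattern {x : α} {w : ℕ} {F : Finset ℕ}
    (hx : x ∈ returnPattern f C V w F) {j : ℕ} : j ∈ F ↔ j < w ∧ f^[j] x ∈ V := by
  obtain ⟨-, hF, -, -, -, hV⟩ := hx
  refine ⟨fun hj => ?_, fun hj => (hV j (Finset.mem_range.2 hj.1)).1 hj.2⟩
  have hjw := Finset.mem_range.1 (hF hj)
  exact ⟨hjw, (hV j (Finset.mem_range.2 hjw)).2 hj⟩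

theorem image_iterate_returnPattern_subset {w s : ℕ} {F : Finset ℕ} (hs : s ∈ F) :
    f^[s] '' returnPattern f C V w F ⊆ V := by
  rintro _ ⟨x, hx, rfl⟩
  exact ((mem_iff_of_mem_returnPattern hx).1 hs).2

theorem disjoint_returnPattern {w w' : ℕ} {F F' : Finset ℕ} (hne : (w, F) ≠ (w', F')) :
    Disjoint (returnPattern f C V w F) (returnPattern f C V w' F') := by
  refine disjoint_left.2 fun x hx hx' => hne ?_
  have hw : w = w' := by
    obtain ⟨hw0, -, -, hwC, hwmin, -⟩ := hx
    obtain ⟨hw0', -, -, hwC', hwmin', -⟩ := hx'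
    rcases lt_trichotomy w w' with h | h | h
    · exact absurd hwC (hwmin' w (Finset.mem_Ioo.2 ⟨hw0, h⟩))
    · exact h
    · exact absurd hwC' (hwmin w' (Finset.mem_Ioo.2 ⟨hw0', h⟩))
  subst hw
  ext j <;> simp [mem_iff_of_mem_returnPattern hx, mem_iff_of_mem_returnPattern hx']

/-- If two excursions met, the later-starting one would start at a point of `C` visited by the
other before its first return to `C`. -/
theorem disjoint_image_iterate_returnPattern (hf : Injective f) {w w' s s' : ℕ}
    {F F' : Finset ℕ} (hs : s ∈ F) (hs' : s' ∈ F') (hne : (w, F, s) ≠ (w', F', s')) :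
    Disjoint (f^[s] '' returnPattern f C V w F) (f^[s'] '' returnPattern f C V w' F') := by
  wlog hss' : s ≤ s' generalizing w w' s s' F F'
  · exact (this hs' hs (fun h => hne h.symm) (by omega)).symm
  rw [disjoint_left]
  rintro _ ⟨x, hx, rfl⟩ ⟨x', hx', hxx'⟩
  have hx_eq : x = f^[s' - s] x' :=
    hf.iterate s (by rw [← iterate_add_apply, Nat.add_sub_cancel' hss', hxx'])
  rcases Nat.eq_zero_or_pos (s' - s) with hd | hd
  · obtain rfl : s = s' := by omega
    rw [hd, iterate_zero_apply] at hx_eq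
    subst hx_eq
    exact disjoint_left.1 (disjoint_returnPattern fun h => hne (by simp_all)) hx hx'
  · obtain ⟨-, -, hxC, -, -, -⟩ := hx
    have hs'w := ((mem_iff_of_mem_returnPattern hx').1 hs').1
    obtain ⟨-, -, -, -, hmin', -⟩ := hx'
    exact hmin' (s' - s) (Finset.mem_Ioo.2 ⟨hd, by omega⟩) (hx_eq ▸ hxC)

end ReturnPattern

theorem ae_mem_image_iterate_returnPattern [MeasurableSpace X] [BorelSpace X] {μ : Measure X}
    [IsFiniteMeasure μ] {T : X ≃ₜ X} (hT : Ergodic T μ) {C V : Set X} (hC : MeasurableSet C)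
    (h0 : μ C ≠ 0) :
    ∀ᵐ y ∂μ, y ∈ V → ∃ w F, ∃ s ∈ F, y ∈ (⇑T)^[s] '' returnPattern T C V w F := by
  classical
  -- `x` is the last point of `C` on the backward orbit of `y`, and `y` lies on its excursion.
  have hback := (Ergodic.symm (e := T.toMeasurableEquiv) hT).ae_frequently_iterate_mem hC h0
  filter_upwards [hback, hT.ae_frequently_iterate_mem hC h0] with y hyb hyf hyV
  have hu : ∃ u, (⇑T.symm)^[u] y ∈ C := hyb.exists
  obtain ⟨j, hj, hjC⟩ := frequently_atTop.1 hyf 1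
  set u := Nat.find hu
  set x := (⇑T.symm)^[u] y
  have hxy (v : ℕ) (hv : v ≤ u) : (⇑T)^[v] x = (⇑T.symm)^[u - v] y := by
    rw [show x = (⇑T.symm)^[v] ((⇑T.symm)^[u - v] y) by
      rw [← iterate_add_apply, Nat.add_sub_cancel' hv]]
    exact LeftInverse.iterate T.apply_symm_apply v _
  have hw : ∃ w, 0 < w ∧ (⇑T)^[w] x ∈ C :=
    ⟨j + u, by omega, by rw [iterate_add_apply, hxy u le_rfl, Nat.sub_self]; exact hjC⟩
  set w := Nat.find hw
  have huw : u < w := by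
    by_contra! hwu
    exact Nat.find_min hu (by have := (Nat.find_spec hw).1; omega : u - w < u)
      (hxy w hwu ▸ (Nat.find_spec hw).2)
  refine ⟨w, (Finset.range w).filter fun j => (⇑T)^[j] x ∈ V, u, ?_, x, ?_,
    by rw [hxy u le_rfl, Nat.sub_self]; rfl⟩
  · simpa [huw, hxy u le_rfl] using hyV
  · refine ⟨(Nat.find_spec hw).1, Finset.filter_subset _ _, Nat.find_spec hu,
      (Nat.find_spec hw).2,
      fun j hj hjC => Nat.find_min hw (Finset.mem_Ioo.1 hj).2 ⟨(Finset.mem_Ioo.1 hj).1, hjC⟩,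
      fun j hj => by simp [Finset.mem_range.1 hj]⟩

theorem Finset.nth_mem {F : Finset ℕ} {j : ℕ} (hj : j < F.card) : Nat.nth (· ∈ F) j ∈ F :=
  Nat.nth_mem_of_lt_card F.finite_toSet (by rwa [Finset.finite_toSet_toFinset])

theorem Finset.injOn_nth (F : Finset ℕ) : InjOn (Nat.nth (· ∈ F)) (Set.Iio F.card) := by
  have := Nat.nth_injOn F.finite_toSet
  rwa [Finset.finite_toSet_toFinset] at this

theorem Finset.exists_lt_card_nth_eq {F : Finset ℕ} {s : ℕ} (hs : s ∈ F) :
    ∃ j < F.card, Nat.nth (· ∈ F) j = s := by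
  have := Nat.exists_lt_card_finite_nth_eq F.finite_toSet hs
  rwa [Finset.finite_toSet_toFinset] at this

section ReturnBlock

variable {α : Type*} {f : α → α} {C V : Set α} {m : ℕ}

theorem disjoint_image_nth_returnPattern (hf : Injective f) {w w' j j' : ℕ} {F F' : Finset ℕ}
    (hj : j < F.card) (hj' : j' < F'.card) (hne : (w, F, j) ≠ (w', F', j')) :
    Disjoint (f^[Nat.nth (· ∈ F) j] '' returnPattern f C V w F)
      (f^[Nat.nth (· ∈ F') j'] '' returnPattern f C V w' F') := by
  refine disjoint_image_iterate_returnPattern hf (Finset.nth_mem hj) (Finset.nth_mem hj')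
    fun h => hne ?_
  simp only [Prod.mk.injEq] at h ⊢
  obtain ⟨rfl, rfl, hjj'⟩ := h
  exact ⟨rfl, rfl, F.injOn_nth hj hj' hjj'⟩

variable (f C V m) in
/-- The base of the `q`-th block of `m` consecutive visits to `V` of the excursions with return
pattern `(w, F)`; it is empty when these excursions make fewer than `(q + 1) * m` visits. -/
def returnBlockBase (w : ℕ) (F : Finset ℕ) (q : ℕ) : Set α :=
  if (q + 1) * m ≤ F.card then returnPattern f C V w F else ∅

theorem isClopen_returnBlockBase [TopologicalSpace α] (hf : Continuous f) (hC : IsClopen C)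
    (hV : IsClopen V) (w : ℕ) (F : Finset ℕ) (q : ℕ) :
    IsClopen (returnBlockBase f C V m w F q) := by
  unfold returnBlockBase
  split_ifs
  exacts [isClopen_returnPattern hf hC hV w F, isClopen_empty]

theorem disjoint_image_nth_returnBlockBase [NeZero m] (hf : Injective f) {w w' q q' : ℕ}
    {F F' : Finset ℕ} {k k' : Fin m} (hne : (w, F, q, k) ≠ (w', F', q', k')) :
    Disjoint (f^[Nat.nth (· ∈ F) (q * m + k)] '' returnBlockBase f C V m w F q)
      (f^[Nat.nth (· ∈ F') (q' * m + k')] '' returnBlockBase f C V m w' F' q') := by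
  unfold returnBlockBase
  split_ifs with hq hq'
  · refine disjoint_image_nth_returnPattern hf (by nlinarith [k.isLt]) (by nlinarith [k'.isLt])
      fun h => hne ?_
    simp only [Prod.mk.injEq] at h
    obtain ⟨rfl, rfl, hqk⟩ := h
    have := (Nat.divModEquiv m).symm.injective (a₁ := (q, k)) (a₂ := (q', k')) hqk
    simp_all
  all_goals simp

end ReturnBlock

section ReturnBlockColumn

variable {T : X ≃ₜ X} {C V : Set X} {m : ℕ} [NeZero m]

variable (T m) in
noncomputable def returnBlock (hC : IsClopen C) (hV : IsClopen V) (w : ℕ) (F : Finset ℕ)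
    (q : ℕ) : Column T m :=
  Column.ofIterates (returnBlockBase T C V m w F q)
    (isClopen_returnBlockBase T.continuous hC hV w F q) (fun k => Nat.nth (· ∈ F) (q * m + k))
    fun _ _ hkk' => disjoint_image_nth_returnBlockBase T.injective (by simp [hkk'])

theorem level_returnBlock (hC : IsClopen C) (hV : IsClopen V) (w : ℕ) (F : Finset ℕ) (q : ℕ)
    (k : Fin m) :
    (returnBlock T m hC hV w F q).level k =
      (⇑T)^[Nat.nth (· ∈ F) (q * m + k)] '' returnBlockBase T C V m w F q :=
  Column.level_ofIterates _ _ _ _ k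

theorem pairwise_disjoint_carrier_returnBlock (hC : IsClopen C) (hV : IsClopen V) :
    Pairwise (Disjoint on fun x : (ℕ × Finset ℕ) × ℕ =>
      (returnBlock T m hC hV x.1.1 x.1.2 x.2).carrier) := by
  rintro ⟨⟨w, F⟩, q⟩ ⟨⟨w', F'⟩, q'⟩ hne
  simp only [onFun, Column.carrier, disjoint_iUnion_left, disjoint_iUnion_right,
    level_returnBlock]
  exact fun k k' => disjoint_image_nth_returnBlockBase T.injective (by simp_all)

theorem carrier_returnBlock_subset (hC : IsClopen C) (hV : IsClopen V) (w : ℕ) (F : Finset ℕ)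
    (q : ℕ) :
    (returnBlock T m hC hV w F q).carrier ⊆ V := by
  refine iUnion_subset fun k => ?_
  rw [level_returnBlock]
  unfold returnBlockBase
  split_ifs
  · exact image_iterate_returnPattern_subset (Finset.nth_mem (by nlinarith [k.isLt]))
  · simp

theorem image_iterate_returnPattern_subset_union (hC : IsClopen C) (hV : IsClopen V) {w s : ℕ}
    {F : Finset ℕ} (hs : s ∈ F) :
    (⇑T)^[s] '' returnPattern T C V w F ⊆ (⋃ q, (returnBlock T m hC hV w F q).carrier) ∪
      ⋃ j ∈ Finset.Ico (F.card / m * m) F.card,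
        (⇑T)^[Nat.nth (· ∈ F) j] '' returnPattern T C V w F := by
  obtain ⟨j, hj, rfl⟩ := Finset.exists_lt_card_nth_eq hs
  intro y hy
  by_cases hjm : F.card / m * m ≤ j
  · exact Or.inr (mem_iUnion₂_of_mem (Finset.mem_Ico.2 ⟨hjm, hj⟩) hy)
  have hq : (j / m + 1) * m ≤ F.card :=
    (Nat.mul_le_mul_right m (Nat.div_lt_of_lt_mul (by rwa [mul_comm, ← not_le]))).trans
      (Nat.div_mul_le_self _ _)
  refine Or.inl (mem_iUnion_of_mem (j / m) (mem_iUnion_of_mem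
    ⟨j % m, Nat.mod_lt _ (Nat.pos_of_neZero m)⟩ ?_))
  rw [level_returnBlock]
  simpa only [returnBlockBase, if_pos hq, Nat.div_add_mod'] using hy

end ReturnBlockColumn

section Stage

variable [MeasurableSpace X] [BorelSpace X] {μ : Measure X} {T : X ≃ₜ X} {C V : Set X}
  {m : ℕ} [NeZero m]

theorem measure_biUnion_Ico_image_iterate_le (hT : MeasurePreserving T μ μ) {E : Set X}
    (hE : MeasurableSet E) (t : ℕ → ℕ) (L : ℕ) :
    μ (⋃ j ∈ Finset.Ico (L / m * m) L, (⇑T)^[t j] '' E) ≤ m * μ E := by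
  refine (measure_biUnion_finset_le _ _).trans ?_
  simp only [hT.measure_image_iterate _ hE, Finset.sum_const, Nat.card_Ico, nsmul_eq_mul]
  have hlt := Nat.lt_div_mul_add (a := L) (Nat.pos_of_neZero m)
  gcongr
  exact_mod_cast (by omega : L - L / m * m ≤ m)

theorem tsum_measure_returnPattern_le (hC : IsClopen C) (hV : IsClopen V) :
    ∑' p : ℕ × Finset ℕ, μ (returnPattern T C V p.1 p.2) ≤ μ C := by
  rw [← measure_iUnion (fun p p' hpp' => disjoint_returnPattern hpp')
    fun p => (isClopen_returnPattern T.continuous hC hV p.1 p.2).isOpen.measurableSet]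
  exact measure_mono (iUnion_subset fun p x hx => hx.2.2.1)

theorem exists_tarray_subset_measure_diff_le_mul [IsFiniteMeasure μ] (hT : Ergodic T μ)
    (hC : IsClopen C) (h0 : μ C ≠ 0) (hV : IsClopen V) :
    ∃ S : TArray T m, S.carrier ⊆ V ∧ μ (V \ S.carrier) ≤ m * μ C := by
  set P : ℕ × Finset ℕ → Set X := fun p => returnPattern T C V p.1 p.2
  obtain ⟨S, hS⟩ := TArray.exists_carrier_eq_iUnion _
    (pairwise_disjoint_carrier_returnBlock (m := m) hC hV)
  refine ⟨S, hS ▸ iUnion_subset fun x => carrier_returnBlock_subset hC hV _ _ _, ?_⟩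
  have hnull : μ (V \ ⋃ p : ℕ × Finset ℕ, ⋃ s ∈ p.2, (⇑T)^[s] '' P p) = 0 := by
    rw [measure_eq_zero_iff_ae_notMem]
    filter_upwards [ae_mem_image_iterate_returnPattern hT hC.isOpen.measurableSet h0]
      with y hy ⟨hyV, hyn⟩
    obtain ⟨w, F, s, hs, hys⟩ := hy hyV
    exact hyn (mem_iUnion_of_mem (w, F) (mem_iUnion₂_of_mem hs hys))
  have hcover : V \ S.carrier ⊆ (V \ ⋃ p : ℕ × Finset ℕ, ⋃ s ∈ p.2, (⇑T)^[s] '' P p) ∪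
      ⋃ p : ℕ × Finset ℕ, ⋃ j ∈ Finset.Ico (p.2.card / m * m) p.2.card,
        (⇑T)^[Nat.nth (· ∈ p.2) j] '' P p := by
    rintro y ⟨hyV, hyS⟩
    refine or_iff_not_imp_left.2 fun hy => ?_
    obtain ⟨p, s, hs, hys⟩ : ∃ p : ℕ × Finset ℕ, ∃ s ∈ p.2, y ∈ (⇑T)^[s] '' P p := by
      simpa [hyV] using hy
    rcases image_iterate_returnPattern_subset_union (m := m) hC hV hs hys with hyB | hyL
    · obtain ⟨q, hyq⟩ := mem_iUnion.1 hyB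
      exact absurd (hS ▸ mem_iUnion_of_mem (p, q) hyq) hyS
    · exact mem_iUnion_of_mem p hyL
  calc μ (V \ S.carrier)
      ≤ μ (V \ ⋃ p : ℕ × Finset ℕ, ⋃ s ∈ p.2, (⇑T)^[s] '' P p) +
        μ (⋃ p : ℕ × Finset ℕ, ⋃ j ∈ Finset.Ico (p.2.card / m * m) p.2.card,
          (⇑T)^[Nat.nth (· ∈ p.2) j] '' P p) :=
        (measure_mono hcover).trans (measure_union_le _ _)
    _ ≤ ∑' p : ℕ × Finset ℕ, m * μ (P p) := by
        rw [hnull, zero_add]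
        exact (measure_iUnion_le _).trans (ENNReal.tsum_le_tsum fun p =>
          measure_biUnion_Ico_image_iterate_le hT.toMeasurePreserving
            (isClopen_returnPattern T.continuous hC hV p.1 p.2).isOpen.measurableSet _ _)
    _ ≤ m * μ C := by
        rw [ENNReal.tsum_mul_left]
        exact mul_le_mul_right (tsum_measure_returnPattern_le hC hV) _

end Stage

theorem exists_tarray_isClopen_carrier_subset_measure_diff_le [MeasurableSpace X] [BorelSpace X]
    {μ : Measure X} [IsFiniteMeasure μ] [NeZero μ] [μ.OuterRegular] [NullSingletonClass μ]
    (hXf : Fractured X) (hfull : ∀ U : Set X, IsOpen U → U.Nonempty → μ U ≠ 0) {T : X ≃ₜ X}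
    (hT : Ergodic T μ) {m : ℕ} [NeZero m] {V : Set X} (hV : IsClopen V) {ε : ℝ≥0∞}
    (hε : ε ≠ 0) :
    ∃ S : TArray T m, IsClopen S.carrier ∧ S.carrier ⊆ V ∧ μ (V \ S.carrier) ≤ ε := by
  obtain ⟨C, hC, h0, hCε⟩ := exists_isClopen_measure_ne_zero_le hXf hfull
    (ENNReal.div_pos (ENNReal.half_pos hε).ne' (ENNReal.natCast_ne_top m)).ne'
  obtain ⟨S, hSV, hSμ⟩ := exists_tarray_subset_measure_diff_le_mul (m := m) hT hC h0 hV
  obtain ⟨N, hN⟩ := S.exists_measure_carrier_diff_truncate_le (μ := μ) (ENNReal.half_pos hε).ne'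
  refine ⟨S.truncate N, S.isClopen_carrier_truncate N,
    (S.carrier_truncate_subset N).trans hSV, ?_⟩
  calc μ (V \ (S.truncate N).carrier)
      ≤ μ (V \ S.carrier) + μ (S.carrier \ (S.truncate N).carrier) :=
        (measure_mono (sdiff_triangle _ _ _)).trans (measure_union_le _ _)
    _ ≤ ε / 2 + ε / 2 :=
        add_le_add (hSμ.trans ((by gcongr : (m : ℝ≥0∞) * μ C ≤ m * (ε / 2 / m)).trans
          ENNReal.mul_div_le)) hN
    _ = ε := ENNReal.add_halves ε

/-- The carriers of the approximating arrays are clopen so that what is left of `V` stays clopen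
and can be approximated in turn. -/
theorem exists_tarray_subset_measure_diff_eq_zero [MeasurableSpace X] {μ : Measure X}
    {T : X ≃ₜ X} {m : ℕ}
    (happrox : ∀ V : Set X, IsClopen V → ∀ ε : ℝ≥0∞, ε ≠ 0 →
      ∃ S : TArray T m, IsClopen S.carrier ∧ S.carrier ⊆ V ∧ μ (V \ S.carrier) ≤ ε)
    {V : Set X} (hV : IsClopen V) :
    ∃ S : TArray T m, S.carrier ⊆ V ∧ μ (V \ S.carrier) = 0 := by
  have happrox' (W : {W : Set X // IsClopen W}) (t : ℕ) : ∃ S : TArray T m,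
      IsClopen S.carrier ∧ S.carrier ⊆ W ∧ μ (W \ S.carrier) ≤ (t : ℝ≥0∞)⁻¹ :=
    happrox W.1 W.2 _ (by simp)
  choose R hRc hRW hRμ using happrox'
  let W : ℕ → {W : Set X // IsClopen W} := fun t =>
    Nat.rec ⟨V, hV⟩ (fun t Wt => ⟨Wt.1 \ (R Wt t).carrier, Wt.2.diff (hRc Wt t)⟩) t
  have hW (t : ℕ) : (W (t + 1)).1 = (W t).1 \ (R (W t) t).carrier := rfl
  have hWanti : Antitone fun t => (W t).1 :=
    antitone_nat_of_succ_le fun t => (hW t).trans_le sdiff_subset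
  have hdisj : Pairwise (Disjoint on fun t => (R (W t) t).carrier) := by
    refine (pairwise_disjoint_on _).2 fun t t' htt' => ?_
    refine Disjoint.mono_right ((hRW _ t').trans (hWanti htt')) ?_
    change Disjoint _ (W (t + 1)).1
    rw [hW]
    exact disjoint_sdiff_right
  obtain ⟨S, hS⟩ := TArray.exists_carrier_eq_iUnion_carrier _ hdisj
  refine ⟨S, hS ▸ iUnion_subset fun t => (hRW _ t).trans (hWanti t.zero_le), ?_⟩
  have hleft (t : ℕ) : V \ S.carrier ⊆ (W t).1 := by
    induction t with
    | zero => exact sdiff_subset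
    | succ t ih =>
      rw [hW]
      exact fun y hy => ⟨ih hy, fun hyt => hy.2 (hS ▸ mem_iUnion_of_mem t hyt)⟩
  refine le_antisymm (ge_of_tendsto' ENNReal.tendsto_inv_nat_nhds_zero fun t => ?_) zero_le
  exact (measure_mono ((hleft (t + 1)).trans (hW t).le)).trans (hRμ _ t)

/-- **Lemma 4(b) of del Junco–Şahin.** Any array of height `h` has an extension of height
`h * m` for every `m ≥ 1`. -/
theorem exists_extension_of_height_mul
    {X : Type*} [TopologicalSpace X] [PolishSpace X] [MeasurableSpace X] [BorelSpace X]
    (hXf : Fractured X)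
    (μ : Measure X) [IsProbabilityMeasure μ] [NullSingletonClass μ]
    (hfull : ∀ U : Set X, IsOpen U → U.Nonempty → μ U ≠ 0)
    (T : X ≃ₜ X) (hT : MeasurePreserving T μ μ)
    (hTerg : ∀ A : Set X, MeasurableSet A → T ⁻¹' A = A → μ A = 0 ∨ μ Aᶜ = 0)
    {h : ℕ} (A : TArray T h) (m : ℕ) (hm : 1 ≤ m) :
    ∃ Ahat : TArray T (m * h), Ahat.IsExtensionOf μ A := by
  have : NeZero m := ⟨by omega⟩
  have hTe : Ergodic T μ := ⟨hT, ⟨fun s hs hinv =>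
    eventuallyConst_set'.2 ((hTerg s hs hinv).imp ae_eq_empty.2 ae_eq_univ.2)⟩⟩
  choose S hSV hSμ using fun c => exists_tarray_subset_measure_diff_eq_zero (m := m)
    (fun V hV ε hε => exists_tarray_isClopen_carrier_subset_measure_diff_le hXf hfull hTe hV hε)
    (A.col c).clopen
  exact A.exists_isExtensionOf_of_measure_base_diff_eq_zero hT S hSV hSμ
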